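/- arXiv:2510.17612 — 2 statements merged into one kernel-verified Lean document; each statement's English description precedes it below -/
import Mathlib

section
/- Let f ∈ F_q[t] be squarefree of degree n ≥ 2, B = F_q[t]/(f), and d a positive integer with q ≥ n. Then M(a,d) := (1/|B^×|)·(Σ_{g monic, deg g ≤ d, gcd(g,f)=1} Λ(g))² satisfies M(a,d) ≥ q^{2d−n} − 2dn·q^{d−n}. -/
/-!
The monic irreducible factors of the squarefree polynomial `X ^ q ^ k - X` have degrees dividing
`k` and summing to `q ^ k`. Sending such a factor `p` to the prime power `p ^ (k / deg p)`, which
is monic of degree `k` with `Λ`-value `deg p`, shows that the monic polynomials of degree `k`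
coprime to `f` carry `Λ`-mass at least `q ^ k - deg f`: the primes dividing `f` have total degree
at most `deg f`. Taking `k = d` and `|Bˣ| ≤ |B| = q ^ deg f` gives the bound.
-/

open scoped Classical

/-- The von Mangoldt function on `F_q[t]`: `Λ(h) = deg p` if `h = u * p ^ k` with `p`
monic irreducible, `u` a unit, `k ≥ 1`, and `Λ(h) = 0` otherwise. -/
noncomputable def polyLambda {F : Type*} [Field F] (h : Polynomial F) : ℕ :=
  if hh : ∃ p : Polynomial F, (p.Monic ∧ Irreducible p) ∧
      ∃ u : F, u ≠ 0 ∧ ∃ k : ℕ, 1 ≤ k ∧ h = Polynomial.C u * p ^ k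
  then (Classical.choose hh).natDegree else 0

open Polynomial UniqueFactorizationMonoid

theorem Finset.sum_le_finsum_mem {α M : Type*} [AddCommMonoid M] [PartialOrder M]
    [IsOrderedAddMonoid M] {f : α → M} {s : Set α} (hs : s.Finite) {t : Finset α}
    (ht : ↑t ⊆ s) (hf : ∀ x ∈ s, 0 ≤ f x) : ∑ x ∈ t, f x ≤ ∑ᶠ x ∈ s, f x := by
  rw [finsum_mem_eq_finite_toFinset_sum f hs]
  exact Finset.sum_le_sum_of_subset_of_nonneg (by simpa using ht)
    fun x hx _ => hf x (hs.mem_toFinset.1 hx)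

theorem Polynomial.finite_setOf_natDegree_le {R : Type*} [Semiring R] [Finite R] (d : ℕ) :
    {g : R[X] | g.natDegree ≤ d}.Finite := by
  have : Finite (degreeLT R (d + 1)) := .of_equiv _ (degreeLTEquiv R (d + 1)).toEquiv.symm
  refine (Set.finite_range (Subtype.val : degreeLT R (d + 1) → R[X])).subset fun g hg => ?_
  refine ⟨⟨g, mem_degreeLT.2 ?_⟩, rfl⟩
  exact (degree_le_natDegree.trans (WithBot.coe_le_coe.2 hg)).trans_lt
    (WithBot.coe_lt_coe.2 d.lt_succ_self)

section

variable {F : Type*} [Field F]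

namespace Polynomial

theorem monic_of_mem_normalizedFactors {g p : F[X]} (hp : p ∈ normalizedFactors g) : p.Monic := by
  rw [← normalize_normalized_factor p hp]
  exact monic_normalize (irreducible_of_normalized_factor p hp).ne_zero

theorem natDegree_eq_sum_natDegree_normalizedFactors {g : F[X]} (hg : g ≠ 0) :
    g.natDegree = ((normalizedFactors g).map natDegree).sum := by
  rw [← natDegree_multiset_prod _ fun h => zero_notMem_normalizedFactors g h,
    prod_normalizedFactors_eq hg]
  exact (natDegree_eq_of_degree_eq degree_normalize).symm

theorem sum_natDegree_normalizedFactors_toFinset_le {g : F[X]} (hg : g ≠ 0) :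
    ∑ p ∈ (normalizedFactors g).toFinset, p.natDegree ≤ g.natDegree := by
  rw [Finset.sum_eq_multiset_sum, Multiset.toFinset_val,
    natDegree_eq_sum_natDegree_normalizedFactors hg]
  obtain ⟨u, hu⟩ := Multiset.le_iff_exists_add.1 (Multiset.dedup_le (normalizedFactors g))
  rw [hu, Multiset.map_add, Multiset.sum_add, ← hu]
  exact Nat.le_add_right _ _

theorem Squarefree.sum_natDegree_normalizedFactors_toFinset {g : F[X]} (hg : Squarefree g) :
    ∑ p ∈ (normalizedFactors g).toFinset, p.natDegree = g.natDegree := by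
  rw [Finset.sum_eq_multiset_sum, Multiset.toFinset_val,
    ((squarefree_iff_nodup_normalizedFactors hg.ne_zero).1 hg).dedup,
    natDegree_eq_sum_natDegree_normalizedFactors hg.ne_zero]

theorem eq_of_dvd_pow_of_irreducible {p p' : F[X]} (hp : p.Monic) (hp' : p'.Monic)
    (hirr : Irreducible p) (hirr' : Irreducible p') {j : ℕ} (h : p' ∣ p ^ j) : p' = p :=
  eq_of_monic_of_associated hp' hp <| hirr'.associated_of_dvd hirr <| hirr'.prime.dvd_of_dvd_pow h

theorem sum_natDegree_normalizedFactors_X_pow_card_pow_sub_X [Fintype F] {k : ℕ} (hk : k ≠ 0) :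
    ∑ p ∈ (normalizedFactors (X ^ Fintype.card F ^ k - X : F[X])).toFinset, p.natDegree =
      Fintype.card F ^ k := by
  have hsep : (X ^ Fintype.card F ^ k - X : F[X]).Separable :=
    galois_poly_separable (ringChar F) _ <| dvd_pow
      ((ringChar.spec F _).1 (FiniteField.cast_card_eq_zero F)) hk
  rw [hsep.squarefree.sum_natDegree_normalizedFactors_toFinset,
    FiniteField.X_pow_card_pow_sub_X_natDegree_eq F hk Fintype.one_lt_card]

theorem finite_quotient_span [Finite F] {f : F[X]} (hf : f ≠ 0) :
    Finite (F[X] ⧸ Ideal.span {f}) :=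
  have : Module.Finite F (F[X] ⧸ Ideal.span {f}) := (AdjoinRoot.powerBasis hf).finite
  Module.finite_of_finite F

theorem natCard_units_quotient_span_le [Fintype F] {f : F[X]} (hf : f ≠ 0) :
    Nat.card (F[X] ⧸ Ideal.span {f})ˣ ≤ Fintype.card F ^ f.natDegree := by
  have := finite_quotient_span hf
  have : Module.Finite F (F[X] ⧸ Ideal.span {f}) := (AdjoinRoot.powerBasis hf).finite
  calc Nat.card (F[X] ⧸ Ideal.span {f})ˣ ≤ Nat.card (F[X] ⧸ Ideal.span {f}) :=
        Nat.card_le_card_of_injective _ Units.val_injective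
    _ = Fintype.card F ^ f.natDegree := by
        rw [Module.natCard_eq_pow_finrank (K := F), finrank_quotient_span_eq_natDegree,
          Nat.card_eq_fintype_card]

end Polynomial

theorem polyLambda_pow {p : F[X]} (hp : p.Monic) (hirr : Irreducible p) {j : ℕ} (hj : j ≠ 0) :
    polyLambda (p ^ j) = p.natDegree := by
  have h : ∃ p' : F[X], (p'.Monic ∧ Irreducible p') ∧
      ∃ u : F, u ≠ 0 ∧ ∃ k : ℕ, 1 ≤ k ∧ p ^ j = C u * p' ^ k :=
    ⟨p, ⟨hp, hirr⟩, 1, one_ne_zero, j, Nat.one_le_iff_ne_zero.2 hj, by simp⟩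
  rw [polyLambda, dif_pos h]
  obtain ⟨⟨hp', hirr'⟩, u, -, k, hk, heq⟩ := Classical.choose_spec h
  refine congrArg natDegree (eq_of_dvd_pow_of_irreducible hp hp' hirr hirr' (j := j) ?_)
  exact ((dvd_pow_self _ (by omega)).mul_left _).trans heq.symm.dvd

theorem sum_natDegree_le_finsum_polyLambda [Finite F] {f : F[X]} {k : ℕ} (hk : k ≠ 0)
    {Q : Finset F[X]}
    (hQ : ∀ p ∈ Q, p.Monic ∧ Irreducible p ∧ p.natDegree ∣ k ∧ ¬ p ∣ f) :
    ∑ p ∈ Q, (p.natDegree : ℝ) ≤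
      ∑ᶠ g ∈ {g : F[X] | g.Monic ∧ g.natDegree ≤ k ∧ IsCoprime g f}, (polyLambda g : ℝ) := by
  set φ : F[X] → F[X] := fun p => p ^ (k / p.natDegree)
  have hexp : ∀ p ∈ Q, k / p.natDegree ≠ 0 := fun p hp h => by
    rw [← Nat.div_mul_cancel (hQ p hp).2.2.1, h, zero_mul] at hk
    exact hk rfl
  have hφ : ∑ p ∈ Q, (p.natDegree : ℝ) = ∑ g ∈ Q.image φ, (polyLambda g : ℝ) := by
    rw [Finset.sum_image fun p hp p' hp' h => ?_]
    · exact Finset.sum_congr rfl fun p hp => by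
        rw [polyLambda_pow (hQ p hp).1 (hQ p hp).2.1 (hexp p hp)]
    · exact eq_of_dvd_pow_of_irreducible (hQ p' hp').1 (hQ p hp).1 (hQ p' hp').2.1
        (hQ p hp).2.1 ((dvd_pow_self p (hexp p hp)).trans h.dvd)
  rw [hφ]
  refine Finset.sum_le_finsum_mem ((finite_setOf_natDegree_le k).subset fun g hg => hg.2.1) ?_
    fun g _ => Nat.cast_nonneg _
  intro g hg
  obtain ⟨p, hp, rfl⟩ := Finset.mem_image.1 (Finset.mem_coe.1 hg)
  obtain ⟨hmon, hirr, hdeg, hpf⟩ := hQ p hp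
  refine ⟨hmon.pow _, ?_, (hirr.coprime_iff_not_dvd.2 hpf).pow_left⟩
  rw [natDegree_pow, Nat.div_mul_cancel hdeg]

theorem card_pow_sub_natDegree_le_finsum_polyLambda [Fintype F] {f : F[X]} (hf : f ≠ 0) {k : ℕ}
    (hk : k ≠ 0) :
    (Fintype.card F : ℝ) ^ k - f.natDegree ≤
      ∑ᶠ g ∈ {g : F[X] | g.Monic ∧ g.natDegree ≤ k ∧ IsCoprime g f}, (polyLambda g : ℝ) := by
  set P := (normalizedFactors (X ^ Fintype.card F ^ k - X : F[X])).toFinset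
  have hP : ∀ p ∈ P, p.Monic ∧ Irreducible p ∧ p.natDegree ∣ k := fun p hp => by
    rw [Multiset.mem_toFinset] at hp
    have hirr := irreducible_of_normalized_factor p hp
    refine ⟨monic_of_mem_normalizedFactors hp, hirr, ?_⟩
    exact hirr.natDegree_dvd_of_dvd_X_pow_card_pow_sub_X
      (Nat.card_eq_fintype_card (α := F) ▸ dvd_of_mem_normalizedFactors hp)
  have hsum : ∑ p ∈ P, (p.natDegree : ℝ) = (Fintype.card F : ℝ) ^ k := by
    exact_mod_cast sum_natDegree_normalizedFactors_X_pow_card_pow_sub_X hk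
  have hdvd : ∑ p ∈ P with p ∣ f, (p.natDegree : ℝ) ≤ f.natDegree := by
    refine mod_cast le_trans (Finset.sum_le_sum_of_subset fun p hp => ?_)
      (sum_natDegree_normalizedFactors_toFinset_le hf)
    obtain ⟨hpP, hpf⟩ := Finset.mem_filter.1 hp
    obtain ⟨hmon, hirr, -⟩ := hP p hpP
    exact Multiset.mem_toFinset.2 <|
      (mem_normalizedFactors_iff' hf).2 ⟨hirr, hmon.normalize_eq_self, hpf⟩
  have hcoprime := sum_natDegree_le_finsum_polyLambda hk (Q := P.filter (¬ · ∣ f))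
    fun p hp => by
      obtain ⟨hpP, hpf⟩ := Finset.mem_filter.1 hp
      exact ⟨(hP p hpP).1, (hP p hpP).2.1, (hP p hpP).2.2, hpf⟩
  linarith [Finset.sum_filter_add_sum_filter_not P (· ∣ f) fun p => (p.natDegree : ℝ)]

end

theorem mul_self_sub_two_mul_le_sq {x c S : ℝ} (hx : 0 ≤ x) (hS : 0 ≤ S) (h : x - c ≤ S) :
    x * x - 2 * c * x ≤ S ^ 2 := by
  rcases le_or_gt x c with hxc | hxc
  · nlinarith
  · nlinarith [mul_le_mul h h (by linarith) hS, sq_nonneg c]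

theorem main_term_lower_bound_general (F : Type*) [Field F] [Fintype F]
    (f : Polynomial F) (hsf : Squarefree f) (n : ℕ) (hdeg : f.natDegree = n)
    (d : ℕ) (hd : 1 ≤ d) :
    (1 / (Nat.card (Polynomial F ⧸ Ideal.span {f})ˣ : ℝ)) *
        (∑ᶠ g ∈ {g : Polynomial F | g.Monic ∧ g.natDegree ≤ d ∧ IsCoprime g f},
          (polyLambda g : ℝ)) ^ 2
      ≥ (Fintype.card F : ℝ) ^ (2 * (d : ℤ) - n) -
          2 * d * n * (Fintype.card F : ℝ) ^ ((d : ℤ) - n) := by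
  have hf := hsf.ne_zero
  have hN : 0 < (Nat.card (F[X] ⧸ Ideal.span {f})ˣ : ℝ) :=
    have := finite_quotient_span hf
    Nat.cast_pos.2 Nat.card_pos
  have hNq : (Nat.card (F[X] ⧸ Ideal.span {f})ˣ : ℝ) ≤ (Fintype.card F : ℝ) ^ n := by
    rw [← hdeg]; exact_mod_cast natCard_units_quotient_span_le hf
  have hSd := card_pow_sub_natDegree_le_finsum_polyLambda hf (k := d) (by omega)
  rw [hdeg] at hSd
  set q : ℝ := (Fintype.card F : ℝ)
  set S := ∑ᶠ g ∈ {g : F[X] | g.Monic ∧ g.natDegree ≤ d ∧ IsCoprime g f}, (polyLambda g : ℝ)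
  have hq : 0 < q := Nat.cast_pos.2 Fintype.card_pos
  have hS : 0 ≤ S := finsum_nonneg fun g => finsum_nonneg fun _ => Nat.cast_nonneg _
  have hsq : q ^ d * q ^ d - 2 * d * n * q ^ d ≤ S ^ 2 := by
    have := mul_self_sub_two_mul_le_sq (pow_pos hq d).le hS hSd
    have : (n : ℝ) * q ^ d ≤ d * (n * q ^ d) :=
      le_mul_of_one_le_left (by positivity) (mod_cast hd)
    linarith
  rw [ge_iff_le, zpow_sub₀ hq.ne', zpow_sub₀ hq.ne', two_mul, zpow_add₀ hq.ne']
  simp only [zpow_natCast]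
  calc q ^ d * q ^ d / q ^ n - 2 * d * n * (q ^ d / q ^ n)
      = (q ^ d * q ^ d - 2 * d * n * q ^ d) / q ^ n := by ring
    _ ≤ S ^ 2 / q ^ n := by gcongr
    _ ≤ S ^ 2 / Nat.card (F[X] ⧸ Ideal.span {f})ˣ := by gcongr
    _ = _ := by ring

/-- Let `f` be squarefree of degree `n ≥ 2`, `B = F_q[t]/(f)`, `d ≥ 1`, `q ≥ n`. Then
`M(a,d) = (1/|Bˣ|)·(Σ_{g monic, deg g ≤ d, (g,f)=1} Λ(g))² ≥ q^(2d-n) - 2dn·q^(d-n)`. -/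
theorem main_term_lower_bound (F : Type*) [Field F] [Fintype F]
    (f : Polynomial F) (hsf : Squarefree f) (n : ℕ) (hn : 2 ≤ n) (hdeg : f.natDegree = n)
    (d : ℕ) (hd : 1 ≤ d) (hq : n ≤ Fintype.card F) :
    (1 / (Nat.card (Polynomial F ⧸ Ideal.span {f})ˣ : ℝ)) *
        (∑ᶠ g ∈ {g : Polynomial F | g.Monic ∧ g.natDegree ≤ d ∧ IsCoprime g f},
          (polyLambda g : ℝ)) ^ 2
      ≥ (Fintype.card F : ℝ) ^ (2 * (d : ℤ) - n) -
          2 * d * n * (Fintype.card F : ℝ) ^ ((d : ℤ) - n) :=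
  main_term_lower_bound_general F f hsf n hdeg d hd
end

section
/- For every positive integer m, the number of partitions p(m) satisfies p(m) ≤ e^{π·√(2m/3)}. -/
/-!
Recording a partition of `m` by its multiplicities gives `p(m) xᵐ ≤ ∏_{n ≤ m} (1 - xⁿ)⁻¹` for
`0 ≤ x < 1`. Expanding `-log (1 - xⁿ) = ∑ₖ xⁿᵏ / k` and using `xᵏ / (1 - xᵏ) ≤ x / (k (1 - x))`
bounds the logarithm of the product by `ζ(2) · t = π² t / 6`, where `t = x / (1 - x)`. Since
`1 / x = 1 + 1 / t ≤ e^{1/t}`, this yields `p(m) ≤ exp (π² t / 6 + m / t)` for every `t > 0`,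
and `t = √(6m) / π` gives the bound.
-/

open Finset Real

namespace Nat.Partition

variable {n : ℕ}

theorem sum_count_mul_parts (p : n.Partition) :
    ∑ i ∈ Icc 1 n, p.parts.count i * i = n :=
  (mem_finsuppAntidiag.1 p.toFinsuppAntidiag_mem_finsuppAntidiag).1

theorem mem_Icc_of_mem_parts {p : n.Partition} {i : ℕ} (hi : i ∈ p.parts) : i ∈ Icc 1 n :=
  mem_Icc.2 ⟨p.parts_pos hi, le_of_mem_parts hi⟩

theorem count_parts_le (p : n.Partition) (i : ℕ) : p.parts.count i ≤ n := by
  by_cases hi : i ∈ p.parts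
  · calc p.parts.count i ≤ p.parts.count i * i := Nat.le_mul_of_pos_right _ (p.parts_pos hi)
      _ ≤ ∑ j ∈ Icc 1 n, p.parts.count j * j :=
        single_le_sum (f := fun j => p.parts.count j * j) (fun _ _ => Nat.zero_le _)
          (mem_Icc_of_mem_parts hi)
      _ = n := p.sum_count_mul_parts
  · simp [Multiset.count_eq_zero_of_notMem hi]

theorem card_mul_pow_le_prod_sum_pow {R : Type*} [CommSemiring R] [PartialOrder R]
    [IsOrderedRing R] {x : R} (hx : 0 ≤ x) (n : ℕ) :
    (Nat.card n.Partition : R) * x ^ n ≤ ∏ i ∈ Icc 1 n, ∑ j ∈ range (n + 1), x ^ (i * j) := by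
  classical
  let counts : n.Partition → ∀ i ∈ Icc 1 n, ℕ := fun p i _ => p.parts.count i
  have counts_mem : ∀ p, counts p ∈ (Icc 1 n).pi fun _ => range (n + 1) := fun p =>
    mem_pi.2 fun i _ => mem_range_succ_iff.2 (p.count_parts_le i)
  have counts_inj : Function.Injective counts := by
    intro p q hpq
    ext i
    by_cases hi : i ∈ Icc 1 n
    · exact congrFun (congrFun hpq i) hi
    · rw [Multiset.count_eq_zero_of_notMem (hi ∘ mem_Icc_of_mem_parts),
        Multiset.count_eq_zero_of_notMem (hi ∘ mem_Icc_of_mem_parts)]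
  have counts_weight : ∀ p, ∏ i ∈ (Icc 1 n).attach, x ^ (i.1 * counts p i.1 i.2) = x ^ n := by
    intro p
    rw [prod_pow_eq_pow_sum, sum_attach (Icc 1 n) fun i => i * p.parts.count i]
    simp_rw [mul_comm _ (p.parts.count _), p.sum_count_mul_parts]
  calc (Nat.card n.Partition : R) * x ^ n = ∑ f ∈ univ.image counts, x ^ n := by
        rw [sum_const, Finset.card_image_of_injective _ counts_inj, Finset.card_univ, nsmul_eq_mul,
          Nat.card_eq_fintype_card]
    _ = ∑ f ∈ univ.image counts, ∏ i ∈ (Icc 1 n).attach, x ^ (i.1 * f i.1 i.2) :=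
        sum_congr rfl fun f hf => by
          obtain ⟨p, -, rfl⟩ := mem_image.1 hf
          exact (counts_weight p).symm
    _ ≤ ∏ i ∈ Icc 1 n, ∑ j ∈ range (n + 1), x ^ (i * j) := by
        rw [prod_sum]
        refine sum_le_sum_of_subset_of_nonneg ?_ fun _ _ _ => prod_nonneg fun _ _ => pow_nonneg hx _
        exact image_subset_iff.2 fun p _ => counts_mem p

end Nat.Partition

theorem succ_mul_pow_mul_one_sub_le {R : Type*} [CommRing R] [PartialOrder R]
    [IsOrderedRing R] {x : R} (hx₀ : 0 ≤ x) (hx₁ : x ≤ 1) (k : ℕ) :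
    (k + 1) * x ^ k * (1 - x) ≤ 1 - x ^ (k + 1) := by
  have h : (k + 1) * x ^ k ≤ ∑ i ∈ range (k + 1), x ^ i := by
    calc (k + 1) * x ^ k = ∑ _i ∈ range (k + 1), x ^ k := by simp [nsmul_eq_mul]
      _ ≤ ∑ i ∈ range (k + 1), x ^ i := sum_le_sum fun i hi =>
          pow_le_pow_of_le_one hx₀ hx₁ (mem_range_succ_iff.1 hi)
  rw [← mul_neg_geom_sum]
  exact mul_le_mul_of_nonneg_right h (sub_nonneg.2 hx₁) |>.trans_eq (mul_comm _ _)

theorem pow_succ_div_one_sub_pow_succ_le {K : Type*} [Field K] [LinearOrder K]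
    [IsStrictOrderedRing K] {x : K} (hx₀ : 0 ≤ x) (hx₁ : x < 1) (k : ℕ) :
    x ^ (k + 1) / (1 - x ^ (k + 1)) ≤ x / ((k + 1) * (1 - x)) := by
  have hxk : x ^ (k + 1) < 1 := pow_lt_one₀ hx₀ hx₁ k.succ_ne_zero
  rw [div_le_div_iff₀ (sub_pos.2 hxk) (by have := sub_pos.2 hx₁; positivity)]
  calc x ^ (k + 1) * ((k + 1) * (1 - x)) = x * ((k + 1) * x ^ k * (1 - x)) := by ring
    _ ≤ x * (1 - x ^ (k + 1)) :=
      mul_le_mul_of_nonneg_left (succ_mul_pow_mul_one_sub_le hx₀ hx₁.le k) hx₀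

theorem sum_neg_log_one_sub_pow_le {x : ℝ} (hx₀ : 0 ≤ x) (hx₁ : x < 1) (m : ℕ) :
    ∑ n ∈ Icc 1 m, -log (1 - x ^ n) ≤ π ^ 2 / 6 * (x / (1 - x)) := by
  have log_series : ∀ n ∈ Icc 1 m,
      HasSum (fun k : ℕ => (x ^ n) ^ (k + 1) / (k + 1)) (-log (1 - x ^ n)) := fun n hn =>
    hasSum_pow_div_log_of_abs_lt_one <| by
      rw [abs_of_nonneg (pow_nonneg hx₀ n)]
      exact pow_lt_one₀ hx₀ hx₁ (Nat.one_le_iff_ne_zero.1 (mem_Icc.1 hn).1)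
  have zeta_two : HasSum (fun k : ℕ => 1 / ((k : ℝ) + 1) ^ 2) (π ^ 2 / 6) := by
    simpa using (hasSum_nat_add_iff' 1).2 hasSum_zeta_two
  have term_le : ∀ k : ℕ, ∑ n ∈ Icc 1 m, (x ^ n) ^ (k + 1) / (k + 1) ≤
      x / (1 - x) * (1 / ((k : ℝ) + 1) ^ 2) := by
    intro k
    set y := x ^ (k + 1)
    have geom : ∑ n ∈ Icc 1 m, y ^ n ≤ y / (1 - y) := by
      simpa [← Ico_add_one_right_eq_Icc] using
        geom_sum_Ico_le_of_lt_one (m := 1) (n := m + 1) (pow_nonneg hx₀ _)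
          (pow_lt_one₀ hx₀ hx₁ k.succ_ne_zero)
    calc ∑ n ∈ Icc 1 m, (x ^ n) ^ (k + 1) / (k + 1) = (∑ n ∈ Icc 1 m, y ^ n) / (k + 1) := by
          simp_rw [sum_div, y, ← pow_mul, mul_comm]
      _ ≤ x / ((k + 1) * (1 - x)) / (k + 1) := by
          gcongr
          exact geom.trans (pow_succ_div_one_sub_pow_succ_le hx₀ hx₁ k)
      _ = x / (1 - x) * (1 / ((k : ℝ) + 1) ^ 2) := by field_simp
  calc ∑ n ∈ Icc 1 m, -log (1 - x ^ n)
      = ∑' k : ℕ, ∑ n ∈ Icc 1 m, (x ^ n) ^ (k + 1) / (k + 1) := (hasSum_sum log_series).tsum_eq.symm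
    _ ≤ ∑' k : ℕ, x / (1 - x) * (1 / ((k : ℝ) + 1) ^ 2) :=
      (hasSum_sum log_series).summable.tsum_le_tsum term_le (zeta_two.summable.mul_left _)
    _ = π ^ 2 / 6 * (x / (1 - x)) := by rw [tsum_mul_left, zeta_two.tsum_eq, mul_comm]

theorem card_partition_mul_pow_le_exp {x : ℝ} (hx₀ : 0 ≤ x) (hx₁ : x < 1) (m : ℕ) :
    (Nat.card m.Partition : ℝ) * x ^ m ≤ exp (π ^ 2 / 6 * (x / (1 - x))) := by
  have factor_le : ∀ n ∈ Icc 1 m,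
      ∑ j ∈ range (m + 1), x ^ (n * j) ≤ exp (-log (1 - x ^ n)) := by
    intro n hn
    have hxn : x ^ n < 1 := pow_lt_one₀ hx₀ hx₁ (Nat.one_le_iff_ne_zero.1 (mem_Icc.1 hn).1)
    calc ∑ j ∈ range (m + 1), x ^ (n * j) = ∑ j ∈ Ico 0 (m + 1), (x ^ n) ^ j := by
          simp_rw [range_eq_Ico, pow_mul]
      _ ≤ (x ^ n) ^ 0 / (1 - x ^ n) := geom_sum_Ico_le_of_lt_one (pow_nonneg hx₀ n) hxn
      _ = exp (-log (1 - x ^ n)) := by rw [exp_neg, exp_log (sub_pos.2 hxn), pow_zero, one_div]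
  calc (Nat.card m.Partition : ℝ) * x ^ m
      ≤ ∏ n ∈ Icc 1 m, ∑ j ∈ range (m + 1), x ^ (n * j) :=
        Nat.Partition.card_mul_pow_le_prod_sum_pow hx₀ m
    _ ≤ ∏ n ∈ Icc 1 m, exp (-log (1 - x ^ n)) :=
        prod_le_prod (fun _ _ => sum_nonneg fun _ _ => pow_nonneg hx₀ _) factor_le
    _ = exp (∑ n ∈ Icc 1 m, -log (1 - x ^ n)) := (exp_sum _ _).symm
    _ ≤ exp (π ^ 2 / 6 * (x / (1 - x))) := exp_le_exp.2 (sum_neg_log_one_sub_pow_le hx₀ hx₁ m)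

theorem card_partition_le_exp_add {t : ℝ} (ht : 0 < t) (m : ℕ) :
    (Nat.card m.Partition : ℝ) ≤ exp (π ^ 2 / 6 * t + m / t) := by
  set x := t / (t + 1) with hx
  have hx₀ : 0 < x := by positivity
  have hx₁ : x < 1 := (div_lt_one (by positivity)).2 (lt_add_one t)
  have x_div_one_sub : x / (1 - x) = t := by rw [hx]; field_simp; ring
  have inv_le : x⁻¹ ≤ exp (1 / t) := by
    calc x⁻¹ = 1 / t + 1 := by rw [hx]; field_simp; ring
      _ ≤ exp (1 / t) := add_one_le_exp _
  calc (Nat.card m.Partition : ℝ)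
      = (Nat.card m.Partition : ℝ) * x ^ m * (x⁻¹) ^ m := by
        rw [mul_assoc, ← mul_pow, mul_inv_cancel₀ hx₀.ne', one_pow, mul_one]
    _ ≤ exp (π ^ 2 / 6 * t) * exp (1 / t) ^ m := by
        gcongr
        simpa [x_div_one_sub] using card_partition_mul_pow_le_exp hx₀.le hx₁ m
    _ = exp (π ^ 2 / 6 * t + m / t) := by rw [← exp_nat_mul, ← exp_add, mul_one_div]

/-- The partition function satisfies `p(m) ≤ exp (π·√(2m/3))` for every `m ≥ 1`. -/
theorem partition_upper_bound (m : ℕ) (hm : 1 ≤ m) :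
    (Nat.card (Nat.Partition m) : ℝ)
      ≤ Real.exp (Real.pi * Real.sqrt (2 * m / 3)) := by
  set u := √(2 * m / 3)
  have hu : 0 < u := sqrt_pos.2 (by positivity)
  have hu2 : u ^ 2 = 2 * m / 3 := sq_sqrt (by positivity)
  -- `t ↦ π²t/6 + m/t` is minimised at `t = 3u/π`, where both terms equal `πu/2`.
  have hexp : π ^ 2 / 6 * (3 * u / π) + m / (3 * u / π) = π * u := by
    field_simp
    linear_combination (-9) * hu2
  calc (Nat.card m.Partition : ℝ) ≤ exp (π ^ 2 / 6 * (3 * u / π) + m / (3 * u / π)) :=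
        card_partition_le_exp_add (by positivity) m
    _ = exp (π * u) := by rw [hexp]
end
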